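/- Let m and n be integers with 1 ≤ n ≤ m, let q > 0 with q ≠ 1, and let B ⊆ {0,1,...,m−1} with |B| = n. Then Σ q^{−circ(C)}, where the sum ranges over all configurations C ∈ C_n(S_{m+1}) whose set of row coordinates equals B, is equal to ∏_{x∈B} [ 1 + |{x, x+1, ..., m−1} ∖ B| ]_{1/q}. -/
import Mathlib


noncomputable section

/-- The `q`-analogue `[k]_q = (1 - q^k)/(1 - q)` of a natural number `k`. -/
def qAnalogue (q : ℝ) (k : ℕ) : ℝ := (1 - q ^ k) / (1 - q)

/-- The staircase Ferrers board `S_{m+1}`: cells `(c, r)` with `c + r ≤ m - 1`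
(equivalently `c + r < m`). -/
def board (m : ℕ) : Finset (ℕ × ℕ) :=
  (Finset.range m ×ˢ Finset.range m).filter (fun p => p.1 + p.2 < m)

/-- `C_n(S_{m+1})`: configurations of `n` non-attacking rooks on the staircase board
`S_{m+1}`. -/
def configs (m n : ℕ) : Finset (Finset (ℕ × ℕ)) :=
  ((board m).powersetCard n).filter
    (fun C => (∀ p ∈ C, ∀ p' ∈ C, p.1 = p'.1 → p = p') ∧
      ∀ p ∈ C, ∀ p' ∈ C, p.2 = p'.2 → p = p')

/-- The statistic `circ(C)` on the board `S_{m+1}`. -/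
def circ (m : ℕ) (C : Finset (ℕ × ℕ)) : ℕ :=
  ((board m).filter (fun p =>
    (∃ p₀ ∈ C, p₀.2 = p.2 ∧ p₀.1 < p.1) ∧ ¬∃ p₀ ∈ C, p₀.1 = p.1 ∧ p.2 < p₀.2)).card

lemma mem_board {m : ℕ} {p : ℕ × ℕ} : p ∈ board m ↔ p.1 + p.2 < m := by
  simp only [board, Finset.mem_filter, Finset.mem_product, Finset.mem_range]
  omega

lemma mem_configs {m n : ℕ} {C : Finset (ℕ × ℕ)} :
    C ∈ configs m n ↔ C ⊆ board m ∧ C.card = n ∧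
      (∀ p ∈ C, ∀ p' ∈ C, p.1 = p'.1 → p = p') ∧
      (∀ p ∈ C, ∀ p' ∈ C, p.2 = p'.2 → p = p') := by
  simp only [configs, Finset.mem_filter, Finset.mem_powersetCard]
  tauto

lemma geom_aux (r : ℝ) : ∀ (n : ℕ) (s : Finset ℕ), s.card = n →
    ∑ a ∈ s, r ^ (s.filter (fun b => a < b)).card = ∑ j ∈ Finset.range n, r ^ j := by
  intro n
  induction n with
  | zero =>
    intro s hs
    rw [Finset.card_eq_zero] at hs
    subst hs; simp
  | succ n IH =>
    intro s hs
    have hne : s.Nonempty := Finset.card_pos.mp (by omega)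
    set a₀ := s.min' hne with ha₀
    have ha₀s : a₀ ∈ s := s.min'_mem hne
    have hcard : (s.erase a₀).card = n := by
      rw [Finset.card_erase_of_mem ha₀s, hs]
      omega
    have h1 : s.filter (fun b => a₀ < b) = s.erase a₀ := by
      ext b
      simp only [Finset.mem_filter, Finset.mem_erase]
      constructor
      · rintro ⟨hb, hlt⟩; exact ⟨by omega, hb⟩
      · rintro ⟨hb, hbs⟩
        exact ⟨hbs, lt_of_le_of_ne (s.min'_le b hbs) (Ne.symm hb)⟩
    have h2 : ∀ a ∈ s.erase a₀,
        s.filter (fun b => a < b) = (s.erase a₀).filter (fun b => a < b) := by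
      intro a ha
      have has : a ∈ s := Finset.mem_of_mem_erase ha
      ext b
      simp only [Finset.mem_filter, Finset.mem_erase]
      constructor
      · rintro ⟨hb, hab⟩
        refine ⟨⟨?_, hb⟩, hab⟩
        intro hbe; subst hbe
        exact absurd (s.min'_le a has) (by omega)
      · rintro ⟨⟨_, hb⟩, hab⟩; exact ⟨hb, hab⟩
    rw [← Finset.add_sum_erase s _ ha₀s, h1, hcard,
      Finset.sum_congr rfl (fun a ha => by rw [h2 a ha]), IH _ hcard,
      Finset.sum_range_succ]
    ring

lemma qAnalogue_eq {q : ℝ} (hq : q ≠ 1) (k : ℕ) :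
    qAnalogue q k = ∑ j ∈ Finset.range k, q ^ j := by
  rw [geom_sum_eq hq, qAnalogue]
  have h1 : (1 : ℝ) - q ≠ 0 := sub_ne_zero.mpr (Ne.symm hq)
  have h2 : q - 1 ≠ 0 := sub_ne_zero.mpr hq
  rw [div_eq_div_iff h1 h2]
  ring

lemma circ_insert (m x c : ℕ) (C' : Finset (ℕ × ℕ))
    (hrows : ∀ p ∈ C', x < p.2) (hc : c + x < m) :
    circ m (insert (c, x) C') = circ m C' +
      (((Finset.range (m - x)) \ C'.image Prod.fst).filter (fun γ => c < γ)).card := by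
  classical
  unfold circ
  rw [← Finset.card_filter_add_card_filter_not
    (s := (board m).filter (fun p =>
      (∃ p₀ ∈ insert (c, x) C', p₀.2 = p.2 ∧ p₀.1 < p.1) ∧
        ¬∃ p₀ ∈ insert (c, x) C', p₀.1 = p.1 ∧ p.2 < p₀.2))
    (p := fun p => p.2 = x)]
  have hB : (((board m).filter (fun p =>
      (∃ p₀ ∈ insert (c, x) C', p₀.2 = p.2 ∧ p₀.1 < p.1) ∧
        ¬∃ p₀ ∈ insert (c, x) C', p₀.1 = p.1 ∧ p.2 < p₀.2)).filter (fun p => ¬p.2 = x)) =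
      (board m).filter (fun p =>
        (∃ p₀ ∈ C', p₀.2 = p.2 ∧ p₀.1 < p.1) ∧ ¬∃ p₀ ∈ C', p₀.1 = p.1 ∧ p.2 < p₀.2) := by
    ext p
    simp only [Finset.mem_filter, Finset.mem_insert]
    constructor
    · rintro ⟨⟨hb, ⟨p₀, hp₀, hrow, hlt⟩, hblock⟩, hne⟩
      rcases hp₀ with h | h
      · exact absurd (h ▸ hrow) (by simpa using fun hh => hne hh.symm)
      · refine ⟨hb, ⟨p₀, h, hrow, hlt⟩, ?_⟩
        intro ⟨p₁, hp₁, h1, h2⟩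
        exact hblock ⟨p₁, Or.inr hp₁, h1, h2⟩
    · rintro ⟨hb, ⟨p₀, hp₀, hrow, hlt⟩, hblock⟩
      have hpx : x < p.2 := hrow ▸ hrows p₀ hp₀
      refine ⟨⟨hb, ⟨p₀, Or.inr hp₀, hrow, hlt⟩, ?_⟩, by omega⟩
      rintro ⟨p₁, hp₁, h1, h2⟩
      rcases hp₁ with h | h
      · subst h; simp at h2; omega
      · exact hblock ⟨p₁, h, h1, h2⟩
  have hA : (((board m).filter (fun p =>
      (∃ p₀ ∈ insert (c, x) C', p₀.2 = p.2 ∧ p₀.1 < p.1) ∧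
        ¬∃ p₀ ∈ insert (c, x) C', p₀.1 = p.1 ∧ p.2 < p₀.2)).filter (fun p => p.2 = x)) =
      (((Finset.range (m - x)) \ C'.image Prod.fst).filter (fun γ => c < γ)).image
        (fun γ => (γ, x)) := by
    ext p
    simp only [Finset.mem_filter, Finset.mem_insert, Finset.mem_image, Finset.mem_sdiff,
      Finset.mem_range, mem_board]
    constructor
    · rintro ⟨⟨hb, ⟨p₀, hp₀, hrow, hlt⟩, hblock⟩, hpx⟩
      refine ⟨p.1, ⟨⟨by omega, ?_⟩, ?_⟩, by rw [← hpx]⟩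
      · rintro ⟨p₁, hp₁, h1⟩
        exact hblock ⟨p₁, Or.inr hp₁, h1, by rw [hpx]; exact hrows p₁ hp₁⟩
      · rcases hp₀ with h | h
        · subst h; exact hlt
        · have := hrows p₀ h; omega
    · rintro ⟨γ, ⟨⟨hγm, hγim⟩, hcγ⟩, rfl⟩
      refine ⟨⟨by omega, ⟨(c, x), Or.inl rfl, rfl, hcγ⟩, ?_⟩, rfl⟩
      rintro ⟨p₁, hp₁, h1, h2⟩
      rcases hp₁ with h | h
      · subst h; simp at h2
      · exact hγim ⟨p₁, h, h1⟩
  rw [hA, hB, Finset.card_image_of_injective _ (fun a b h => by simpa using h)]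
  ring

lemma key (m : ℕ) (q : ℝ) (hq0 : 0 < q) (hq1 : q ≠ 1) :
    ∀ (n : ℕ) (B : Finset ℕ), B ⊆ Finset.range m → B.card = n →
    ∑ C ∈ (configs m n).filter (fun C => C.image Prod.snd = B), q ^ (-(circ m C : ℤ)) =
      ∏ x ∈ B, qAnalogue (1 / q) (1 + ((Finset.Ico x m) \ B).card) := by
  classical
  have hq0' : q ≠ 0 := hq0.ne'
  have h1q : (1 / q : ℝ) ≠ 1 := by
    rw [one_div, Ne, inv_eq_one]
    exact hq1
  intro n
  induction n with
  | zero =>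
    intro B hB hcard
    rw [Finset.card_eq_zero] at hcard
    subst hcard
    have hset : (configs m 0).filter (fun C => C.image Prod.snd = (∅ : Finset ℕ)) = {∅} := by
      ext C
      simp only [Finset.mem_filter, Finset.mem_singleton, mem_configs]
      constructor
      · rintro ⟨⟨_, hc, _, _⟩, _⟩
        exact Finset.card_eq_zero.mp hc
      · rintro rfl
        refine ⟨⟨Finset.empty_subset _, rfl, ?_, ?_⟩, ?_⟩ <;> simp
    rw [hset, Finset.sum_singleton]
    have hcirc : circ m ∅ = 0 := by simp [circ]
    rw [hcirc]
    simp
  | succ n IH =>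
    intro B hB hcard
    have hBne : B.Nonempty := Finset.card_pos.mp (by omega)
    set x := B.min' hBne with hxdef
    have hxB : x ∈ B := B.min'_mem hBne
    have hxm : x < m := Finset.mem_range.mp (hB hxB)
    have hxmin : ∀ y ∈ B, x ≤ y := fun y hy => B.min'_le y hy
    set B' := B.erase x with hB'def
    have hB'sub : B' ⊆ Finset.range m := fun y hy => hB (Finset.mem_of_mem_erase hy)
    have hB'card : B'.card = n := by
      rw [hB'def, Finset.card_erase_of_mem hxB, hcard]
      omega
    have hB'gt : ∀ y ∈ B', x < y := by
      intro y hy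
      exact lt_of_le_of_ne (hxmin y (Finset.mem_of_mem_erase hy))
        (Ne.symm (Finset.ne_of_mem_erase hy))
    set S' := (configs m n).filter (fun C => C.image Prod.snd = B') with hS'
    have hS'spec : ∀ C' ∈ S', C' ⊆ board m ∧ C'.card = n ∧
        (∀ p ∈ C', ∀ p' ∈ C', p.1 = p'.1 → p = p') ∧
        (∀ p ∈ C', ∀ p' ∈ C', p.2 = p'.2 → p = p') ∧ C'.image Prod.snd = B' := by
      intro C' hC'
      rw [hS', Finset.mem_filter, mem_configs] at hC'
      tauto
    have hrowsS' : ∀ C' ∈ S', ∀ p ∈ C', x < p.2 := by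
      intro C' hC' p hp
      exact hB'gt p.2 ((hS'spec C' hC').2.2.2.2 ▸ Finset.mem_image_of_mem Prod.snd hp)
    have hfstS' : ∀ C' ∈ S', C'.image Prod.fst ⊆ Finset.range (m - x) := by
      intro C' hC' γ hγ
      obtain ⟨p, hp, rfl⟩ := Finset.mem_image.mp hγ
      have hb : p.1 + p.2 < m := mem_board.mp ((hS'spec C' hC').1 hp)
      have := hrowsS' C' hC' p hp
      rw [Finset.mem_range]
      omega
    have hfstcard : ∀ C' ∈ S', (C'.image Prod.fst).card = n := by
      intro C' hC'
      rw [Finset.card_image_of_injOn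
        (fun p hp p' hp' h => (hS'spec C' hC').2.2.1 p hp p' hp' h),
        (hS'spec C' hC').2.1]
    have havailcard : ∀ C' ∈ S',
        ((Finset.range (m - x)) \ C'.image Prod.fst).card = m - x - n := by
      intro C' hC'
      rw [Finset.card_sdiff_of_subset (hfstS' C' hC'), Finset.card_range, hfstcard C' hC']
    have hnotmem : ∀ C' ∈ S', ∀ c : ℕ, (c, x) ∉ C' := by
      intro C' hC' c hmem
      have := hrowsS' C' hC' (c, x) hmem
      omega
    -- the bijection
    have hbij : ∑ C ∈ (configs m (n + 1)).filter (fun C => C.image Prod.snd = B),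
        q ^ (-(circ m C : ℤ)) =
        ∑ p ∈ S'.sigma (fun C' => (Finset.range (m - x)) \ C'.image Prod.fst),
          q ^ (-(circ m (insert (p.2, x) p.1) : ℤ)) := by
      refine (Finset.sum_bij (fun p _ => insert (p.2, x) p.1) ?_ ?_ ?_ ?_).symm
      · -- maps into target
        rintro ⟨C', c⟩ hp
        rw [Finset.mem_sigma] at hp
        obtain ⟨hC', hcav⟩ := hp
        obtain ⟨hsub, hcards, hcol, hrow, himg⟩ := hS'spec C' hC'
        have hcm : c < m - x := Finset.mem_range.mp (Finset.mem_sdiff.mp hcav).1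
        have hcim : c ∉ C'.image Prod.fst := (Finset.mem_sdiff.mp hcav).2
        have hnm : (c, x) ∉ C' := hnotmem C' hC' c
        rw [Finset.mem_filter, mem_configs]
        refine ⟨⟨?_, ?_, ?_, ?_⟩, ?_⟩
        · refine Finset.insert_subset (mem_board.mpr ?_) hsub
          show c + x < m
          omega
        · rw [Finset.card_insert_of_notMem hnm, hcards]
        · intro p hp p' hp' h
          rcases Finset.mem_insert.mp hp with rfl | hp <;>
            rcases Finset.mem_insert.mp hp' with rfl | hp'
          · rfl
          · exact absurd (Finset.mem_image.mpr ⟨p', hp', h.symm⟩) hcim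
          · exact absurd (Finset.mem_image.mpr ⟨p, hp, h⟩) hcim
          · exact hcol p hp p' hp' h
        · intro p hp p' hp' h
          rcases Finset.mem_insert.mp hp with rfl | hp <;>
            rcases Finset.mem_insert.mp hp' with rfl | hp'
          · rfl
          · have := hrowsS' C' hC' p' hp'; simp at h; omega
          · have := hrowsS' C' hC' p hp; simp at h; omega
          · exact hrow p hp p' hp' h
        · rw [Finset.image_insert, himg, hB'def]
          exact Finset.insert_erase hxB
      · -- injective
        rintro ⟨C₁, c₁⟩ h₁ ⟨C₂, c₂⟩ h₂ heq
        rw [Finset.mem_sigma] at h₁ h₂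
        simp only at heq
        have hn₁ : (c₁, x) ∉ C₁ := hnotmem C₁ h₁.1 c₁
        have hn₂ : (c₂, x) ∉ C₂ := hnotmem C₂ h₂.1 c₂
        have hc : c₁ = c₂ := by
          have : (c₁, x) ∈ insert (c₂, x) C₂ := heq ▸ Finset.mem_insert_self _ _
          rcases Finset.mem_insert.mp this with h | h
          · exact (Prod.mk.injEq .. ▸ h).1
          · exact absurd (hrowsS' C₂ h₂.1 _ h) (by simp)
        subst hc
        have hC : C₁ = C₂ := by
          rw [← Finset.erase_insert hn₁, ← Finset.erase_insert hn₂, heq]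
        subst hC
        rfl
      · -- surjective
        intro C hC
        rw [Finset.mem_filter, mem_configs] at hC
        obtain ⟨⟨hsub, hcards, hcol, hrow⟩, himg⟩ := hC
        have hx' : x ∈ C.image Prod.snd := himg ▸ hxB
        obtain ⟨p, hp, hpx⟩ := Finset.mem_image.mp hx'
        have hpp : p = (p.1, x) := by rw [← hpx]
        set C' := C.erase p with hC'def
        have hC'sub : C' ⊆ C := Finset.erase_subset p C
        have hC'S' : C' ∈ S' := by
          rw [hS', Finset.mem_filter, mem_configs]
          refine ⟨⟨hC'sub.trans hsub, ?_, fun a ha b hb => hcol a (hC'sub ha) b (hC'sub hb),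
            fun a ha b hb => hrow a (hC'sub ha) b (hC'sub hb)⟩, ?_⟩
          · rw [hC'def, Finset.card_erase_of_mem hp, hcards]
            omega
          · apply Finset.Subset.antisymm
            · intro y hy
              obtain ⟨p', hp', rfl⟩ := Finset.mem_image.mp hy
              have hp'C : p' ∈ C := hC'sub hp'
              rw [hB'def, Finset.mem_erase]
              refine ⟨?_, himg ▸ Finset.mem_image_of_mem Prod.snd hp'C⟩
              intro hyx
              have : p' = p := hrow p' hp'C p hp (hyx.trans hpx.symm)
              rw [hC'def, Finset.mem_erase] at hp'
              exact hp'.1 this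
            · intro y hy
              rw [hB'def, Finset.mem_erase] at hy
              obtain ⟨hyx, hyB⟩ := hy
              obtain ⟨p', hp', rfl⟩ := Finset.mem_image.mp (himg ▸ hyB)
              refine Finset.mem_image_of_mem Prod.snd ?_
              rw [hC'def, Finset.mem_erase]
              refine ⟨?_, hp'⟩
              intro h; subst h; exact hyx hpx
        refine ⟨⟨C', p.1⟩, Finset.mem_sigma.mpr ⟨hC'S', ?_⟩, ?_⟩
        · rw [Finset.mem_sdiff, Finset.mem_range]
          have hb : p.1 + p.2 < m := mem_board.mp (hsub hp)
          constructor
          · show p.1 < m - x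
            omega
          show p.1 ∉ C'.image Prod.fst
          intro hmem
          obtain ⟨p', hp', h1⟩ := Finset.mem_image.mp hmem
          have : p' = p := hcol p' (hC'sub hp') p hp h1
          rw [hC'def, Finset.mem_erase] at hp'
          exact hp'.1 this
        · show insert (p.1, x) C' = C
          rw [← hpp]
          exact Finset.insert_erase hp
      · rintro ⟨C', c⟩ _
        rfl
    rw [hbij, Finset.sum_sigma]
    have hpow : ∀ a b : ℕ, q ^ (-((a + b : ℕ) : ℤ)) = q ^ (-(a : ℤ)) * (1 / q) ^ b := by
      intro a b
      rw [Nat.cast_add, neg_add, zpow_add₀ hq0', one_div, inv_pow, ← zpow_natCast q b,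
        ← zpow_neg]
    have hinner : ∀ C' ∈ S',
        ∑ c ∈ (Finset.range (m - x)) \ C'.image Prod.fst,
          q ^ (-(circ m (insert (c, x) C') : ℤ)) =
        q ^ (-(circ m C' : ℤ)) * qAnalogue (1 / q) (m - x - n) := by
      intro C' hC'
      have hcongr : ∀ c ∈ (Finset.range (m - x)) \ C'.image Prod.fst,
          q ^ (-(circ m (insert (c, x) C') : ℤ)) =
          q ^ (-(circ m C' : ℤ)) *
            (1 / q) ^ ((((Finset.range (m - x)) \ C'.image Prod.fst).filter
              (fun γ => c < γ)).card) := by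
        intro c hc
        rw [circ_insert m x c C' (hrowsS' C' hC')
          (by rw [Finset.mem_sdiff, Finset.mem_range] at hc; omega), hpow]
      rw [Finset.sum_congr rfl hcongr, ← Finset.mul_sum,
        geom_aux (1 / q) (m - x - n) _ (havailcard C' hC'), ← qAnalogue_eq h1q]
    rw [Finset.sum_congr rfl hinner, ← Finset.sum_mul, IH B' hB'sub hB'card]
    -- now the product side
    have hsubIco : B ⊆ Finset.Ico x m := by
      intro y hy
      rw [Finset.mem_Ico]
      exact ⟨hxmin y hy, Finset.mem_range.mp (hB hy)⟩
    have hcardle : n + 1 ≤ m - x := by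
      have := Finset.card_le_card hsubIco
      rw [hcard, Nat.card_Ico] at this
      exact this
    have hxterm : 1 + ((Finset.Ico x m) \ B).card = m - x - n := by
      rw [Finset.card_sdiff_of_subset hsubIco, Nat.card_Ico, hcard]
      omega
    have hB'term : ∀ y ∈ B', (Finset.Ico y m) \ B = (Finset.Ico y m) \ B' := by
      intro y hy
      have hxy := hB'gt y hy
      ext z
      simp only [Finset.mem_sdiff, Finset.mem_Ico, hB'def, Finset.mem_erase]
      constructor
      · rintro ⟨hz, hzB⟩; exact ⟨hz, fun h => hzB h.2⟩
      · rintro ⟨hz, hzB'⟩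
        refine ⟨hz, fun h => hzB' ⟨by omega, h⟩⟩
    have hprod : ∏ y ∈ B', qAnalogue (1 / q) (1 + ((Finset.Ico y m) \ B').card) =
        ∏ y ∈ B', qAnalogue (1 / q) (1 + ((Finset.Ico y m) \ B).card) :=
      Finset.prod_congr rfl (fun y hy => by rw [hB'term y hy])
    rw [← Finset.mul_prod_erase B _ hxB, hxterm, ← hB'def, hprod]
    ring

/-- Summing `q^{-circ(C)}` over all extensions `C ∈ C_n(S_{m+1})` of a given set `B` of
row coordinates gives `∏_{x ∈ B} [1 + |{x, ..., m-1} \ B|]_{1/q}`. -/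
theorem sum_extensions (m n : ℕ) (hn : 1 ≤ n) (hm : n ≤ m) (q : ℝ)
    (hq0 : 0 < q) (hq1 : q ≠ 1) (B : Finset ℕ) (hB : B ⊆ Finset.range m)
    (hBcard : B.card = n) :
    ∑ C ∈ (configs m n).filter (fun C => C.image Prod.snd = B), q ^ (-(circ m C : ℤ)) =
      ∏ x ∈ B, qAnalogue (1 / q) (1 + ((Finset.Ico x m) \ B).card) := by
  exact key m q hq0 hq1 n B hB hBcard
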